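/- arXiv:1610.04785 — 5 statements merged into one kernel-verified Lean document; each statement's English description precedes it below -/
import Mathlib

section
/- Let G be a bipartite graph with parts A and B, let X, Y ⊆ A, let M∩ be a matching in G[(X ∩ Y) ∪ B] and M∪ a matching in G[(X ∪ Y) ∪ B]. Then in the union of M∩ and M∪, no connected component that is a path can contain both a vertex of X \ Y and a vertex of Y \ X. -/
open SimpleGraph

section Aux
variable {V : Type} {G : SimpleGraph V} {Mi Mu : G.Subgraph} {H : SimpleGraph V}

lemma aux_edge_mem (hH : H = SimpleGraph.fromEdgeSet (Mi.edgeSet ∪ Mu.edgeSet))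
    {a c : V} (h : H.Adj a c) : Mi.Adj a c ∨ Mu.Adj a c := by
  subst hH
  rcases ((SimpleGraph.fromEdgeSet_adj _).mp h).1 with h' | h'
  · exact Or.inl (SimpleGraph.Subgraph.mem_edgeSet.mp h')
  · exact Or.inr (SimpleGraph.Subgraph.mem_edgeSet.mp h')

lemma aux_alt (hMi : Mi.IsMatching) (hMu : Mu.IsMatching)
    (hH : H = SimpleGraph.fromEdgeSet (Mi.edgeSet ∪ Mu.edgeSet))
    {a c d : V} (h1 : H.Adj a c) (h2 : H.Adj c d) (hne : a ≠ d) :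
    (Mi.Adj a c ∧ ¬ Mi.Adj c d) ∨ (¬ Mi.Adj a c ∧ Mi.Adj c d) := by
  by_cases hi1 : Mi.Adj a c
  · left
    refine ⟨hi1, fun hi2 => hne ?_⟩
    exact (hMi (Mi.edge_vert hi2)).unique hi1.symm hi2
  · right
    refine ⟨hi1, ?_⟩
    by_contra hi2
    have hu1 : Mu.Adj a c := (aux_edge_mem hH h1).resolve_left hi1
    have hu2 : Mu.Adj c d := (aux_edge_mem hH h2).resolve_left hi2
    exact hne ((hMu (Mu.edge_vert hu2)).unique hu1.symm hu2)

lemma aux_lenparity (hMi : Mi.IsMatching) (hMu : Mu.IsMatching)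
    (hH : H = SimpleGraph.fromEdgeSet (Mi.edgeSet ∪ Mu.edgeSet))
    {c b : V} (p : H.Walk c b) :
    ∀ {a : V} (hadj : H.Adj a c), (SimpleGraph.Walk.cons hadj p).IsPath → b ∉ Mi.verts →
      (Mi.Adj a c → Even (p.length + 1)) ∧ (¬ Mi.Adj a c → Odd (p.length + 1)) := by
  induction p with
  | nil =>
    intro a hadj hp hb
    constructor
    · intro hMiac
      exact absurd (Mi.edge_vert hMiac.symm) hb
    · intro _
      exact odd_one
  | @cons c d b h' q ih =>
    intro a hadj hp hb
    have hp' : (SimpleGraph.Walk.cons h' q).IsPath :=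
      (SimpleGraph.Walk.cons_isPath_iff _ _).mp hp |>.1
    have hans : a ∉ (SimpleGraph.Walk.cons h' q).support :=
      ((SimpleGraph.Walk.cons_isPath_iff _ _).mp hp).2
    have hned : a ≠ d := by
      intro had
      apply hans
      rw [SimpleGraph.Walk.support_cons, had]
      exact List.mem_cons_of_mem _ q.start_mem_support
    have halt := aux_alt hMi hMu hH hadj h' hned
    have hih := ih h' hp' hb
    rw [SimpleGraph.Walk.length_cons]
    constructor
    · intro hi
      rcases halt with ⟨_, hno⟩ | ⟨hno, _⟩
      · exact (hih.2 hno).add_one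
      · exact absurd hi hno
    · intro hno
      rcases halt with ⟨hi, _⟩ | ⟨_, hi⟩
      · exact absurd hi hno
      · exact (hih.1 hi).add_one

lemma aux_endpoint (hMi : Mi.IsMatching) (hMu : Mu.IsMatching)
    (hH : H = SimpleGraph.fromEdgeSet (Mi.edgeSet ∪ Mu.edgeSet))
    {x : V} (hx : x ∉ Mi.verts) :
    ∀ {u v : V} (w : H.Walk u v), w.IsPath → x ∈ w.support → x = u ∨ x = v := by
  intro u v w
  induction w with
  | nil =>
    intro _ hxs
    simp only [SimpleGraph.Walk.support_nil, List.mem_singleton] at hxs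
    exact Or.inl hxs
  | @cons u c v h q ih =>
    intro hp hxs
    rw [SimpleGraph.Walk.support_cons, List.mem_cons] at hxs
    rcases hxs with rfl | hxs
    · exact Or.inl rfl
    by_cases hxc : x = c
    · subst hxc
      cases q with
      | nil => exact Or.inr rfl
      | @cons x d v h' r =>
        exfalso
        have hni1 : ¬ Mi.Adj u x := fun hi => hx (Mi.edge_vert hi.symm)
        have hni2 : ¬ Mi.Adj x d := fun hi => hx (Mi.edge_vert hi)
        have hund : u ≠ d := by
          intro hud
          apply ((SimpleGraph.Walk.cons_isPath_iff _ _).mp hp).2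
          rw [SimpleGraph.Walk.support_cons, hud]
          exact List.mem_cons_of_mem _ r.start_mem_support
        rcases aux_alt hMi hMu hH h h' hund with ⟨hi, _⟩ | ⟨_, hi⟩
        · exact hni1 hi
        · exact hni2 hi
    · have := ih ((SimpleGraph.Walk.cons_isPath_iff _ _).mp hp).1 hxs
      rcases this with h1 | h1
      · exact absurd h1 hxc
      · exact Or.inr h1

end Aux

/-- A walk `w` spans the connected component `c` of the graph `H`:
its support is exactly the vertex set of `c` and it uses every edge of `H`
whose endpoints lie in `c`. -/
def spansComponent {V : Type} (H : SimpleGraph V) (c : H.ConnectedComponent)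
    {u v : V} (w : H.Walk u v) : Prop :=
  (∀ z : V, z ∈ w.support ↔ H.connectedComponentMk z = c) ∧
  (∀ e ∈ H.edgeSet, (∀ z ∈ e, H.connectedComponentMk z = c) → e ∈ w.edges)

/-- Let `G` be bipartite with parts `A`, `B`, let `X, Y ⊆ A`, `Mi` a matching in
`G[(X ∩ Y) ∪ B]` and `Mu` a matching in `G[(X ∪ Y) ∪ B]`.  No connected component of
their union that is a path contains both a vertex of `X \ Y` and a vertex of `Y \ X`. -/
theorem stmt3 {V : Type} (G : SimpleGraph V) (A B : Set V)
    (hpart : A ∪ B = Set.univ) (hdisj : Disjoint A B)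
    (hbip : ∀ u v : V, G.Adj u v → (u ∈ A ∧ v ∈ B) ∨ (u ∈ B ∧ v ∈ A))
    (X Y : Set V) (hX : X ⊆ A) (hY : Y ⊆ A)
    (Mi Mu : G.Subgraph) (hMi : Mi.IsMatching) (hMu : Mu.IsMatching)
    (hMiv : Mi.verts ⊆ (X ∩ Y) ∪ B) (hMuv : Mu.verts ⊆ (X ∪ Y) ∪ B)
    (H : SimpleGraph V) (hH : H = SimpleGraph.fromEdgeSet (Mi.edgeSet ∪ Mu.edgeSet))
    (c : H.ConnectedComponent)
    (u v : V) (w : H.Walk u v) (hw : w.IsPath) (hspan : spansComponent H c w)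
    (x : V) (hx : x ∈ X \ Y) (hxc : H.connectedComponentMk x = c)
    (y : V) (hy : y ∈ Y \ X) (hyc : H.connectedComponentMk y = c) :
    False := by
  -- bipartite parity: any walk between two vertices of the same side has even length
  have hbipwalk : ∀ {a b : V} (p : H.Walk a b), ((a ∈ A) ↔ (b ∈ A)) ↔ Even p.length := by
    intro a b p
    induction p with
    | nil => simp
    | @cons a c b h q ih =>
      have hG : G.Adj a c := by
        rcases aux_edge_mem hH h with h' | h'
        · exact Mi.adj_sub h'
        · exact Mu.adj_sub h'
      have hflip : (a ∈ A) ↔ ¬ (c ∈ A) := by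
        rcases hbip a c hG with ⟨ha, hc⟩ | ⟨ha, hc⟩
        · constructor
          · intro _ hcA
            exact (hdisj.le_bot ⟨hcA, hc⟩ : (⊥ : Set V) c).elim
          · intro _
            exact ha
        · constructor
          · intro haA _
            exact (hdisj.le_bot ⟨haA, ha⟩ : (⊥ : Set V) a).elim
          · intro hcn
            exfalso
            have : c ∈ A ∪ B := by rw [hpart]; trivial
            rcases this with h1 | h1
            · exact hcn h1
            · exact (hdisj.le_bot ⟨hc, h1⟩ : (⊥ : Set V) c).elim
      rw [SimpleGraph.Walk.length_cons, Nat.even_add_one, ← ih]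
      tauto
  have hxA : x ∈ A := hX hx.1
  have hyA : y ∈ A := hY hy.1
  have hxMi : x ∉ Mi.verts := by
    intro hmem
    rcases hMiv hmem with h1 | h1
    · exact hx.2 h1.2
    · exact (hdisj.le_bot ⟨hxA, h1⟩ : (⊥ : Set V) x).elim
  have hyMi : y ∉ Mi.verts := by
    intro hmem
    rcases hMiv hmem with h1 | h1
    · exact hy.2 h1.1
    · exact (hdisj.le_bot ⟨hyA, h1⟩ : (⊥ : Set V) y).elim
  have hxy : x ≠ y := fun hxy => hx.2 (hxy ▸ hy.1)
  have hxs : x ∈ w.support := (hspan.1 x).mpr hxc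
  have hys : y ∈ w.support := (hspan.1 y).mpr hyc
  have key : ∀ {a b : V} (p : H.Walk a b), p.IsPath → a ≠ b →
      a ∉ Mi.verts → b ∉ Mi.verts → a ∈ A → b ∈ A → False := by
    intro a b p hp hab ha hb haA hbA
    cases p with
    | nil => exact hab rfl
    | @cons a c b hadj q =>
      have hodd : Odd (q.length + 1) := by
        have := aux_lenparity hMi hMu hH q hadj hp hb
        exact this.2 (fun hi => ha (Mi.edge_vert hi))
      have heven : Even ((SimpleGraph.Walk.cons hadj q).length) :=
        (hbipwalk _).mp (iff_of_true haA hbA)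
      rw [SimpleGraph.Walk.length_cons] at heven
      exact (Nat.not_odd_iff_even.mpr heven) hodd
  rcases aux_endpoint hMi hMu hH hxMi w hw hxs with rfl | rfl
  · rcases aux_endpoint hMi hMu hH hyMi w hw hys with rfl | rfl
    · exact hxy rfl
    · exact key w hw hxy hxMi hyMi hxA hyA
  · rcases aux_endpoint hMi hMu hH hyMi w hw hys with rfl | rfl
    · have hrev : w.reverse.IsPath := hw.reverse
      have : Even w.reverse.length → False := by
        intro _
        exact key w.reverse hrev hxy hxMi hyMi hxA hyA
      exact this ((hbipwalk w.reverse).mp (iff_of_true hxA hyA))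
    · exact hxy rfl
end

section
/- Let G = (A ∪ B, E) be an edge-weighted bipartite graph with nonnegative weights, and for S ⊆ A let f(S) be the maximum weight of a matching in the induced subgraph G[S ∪ B]. Then f is submodular: f(X) + f(Y) ≥ f(X ∪ Y) + f(X ∩ Y) for all X, Y ⊆ A. -/
/-!
Take optimal matchings `M` for `X ∪ Y` and `N` for `X ∩ Y`, and let `C` be the union of the
components of the graph with edge set `M ∪ N` that meet `A ∩ (Y \ X)`. Exchanging `M` and `N`
on `C` gives matchings for `X` and for `Y` of the same total weight. The only danger is that `C`
contains a vertex of `A ∩ (X \ Y)`; but a path from `a ∈ A ∩ (Y \ X)` alternates between `M`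
and `N`, starting with `M` since `N` does not cover `a`, so by bipartiteness it re-enters `A`
only along `N`-edges, i.e. at vertices of `X ∩ Y`.
-/

/-- The partial maximum weight matching function: `maxMatchWeight G A w S` is the
supremum of the total weights of matchings of `G` all of whose endpoints lying in
the part `A` belong to `S` (i.e. matchings of the induced subgraph `G[S ∪ B]`). -/
noncomputable def maxMatchWeight {V : Type} (G : SimpleGraph V) (A : Set V)
    (w : Sym2 V → ℝ) (S : Set V) : ℝ :=
  sSup {x : ℝ | ∃ M : Finset (Sym2 V), (↑M : Set (Sym2 V)) ⊆ G.edgeSet ∧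
    (∀ e ∈ M, ∀ f ∈ M, e ≠ f → ∀ v : V, v ∈ e → v ∉ f) ∧
    (∀ e ∈ M, ∀ v ∈ e, v ∈ A → v ∈ S) ∧ x = ∑ e ∈ M, w e}


open SimpleGraph

variable {V : Type}

def IsEdgeMatching (M : Finset (Sym2 V)) : Prop :=
  ∀ e ∈ M, ∀ f ∈ M, ∀ v ∈ e, v ∈ f → e = f

theorem IsEdgeMatching.eq_of_mk_mem {M : Finset (Sym2 V)} (hM : IsEdgeMatching M) {u v w : V}
    (huv : s(u, v) ∈ M) (hvw : s(v, w) ∈ M) (hne : u ≠ v) : u = w := by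
  rcases Sym2.eq_iff.mp (hM _ huv _ hvw v (Sym2.mem_mk_right u v) (Sym2.mem_mk_left v w))
    with ⟨h, -⟩ | ⟨h, -⟩
  · exact absurd h hne
  · exact h

/-- The matchings of `G[S ∪ B]`, where `B` is the complement of `A`. -/
structure IsPartialMatching (G : SimpleGraph V) (A S : Set V) (M : Finset (Sym2 V)) : Prop where
  subset_edgeSet : (M : Set (Sym2 V)) ⊆ G.edgeSet
  isEdgeMatching : IsEdgeMatching M
  mem_of_mem : ∀ e ∈ M, ∀ v ∈ e, v ∈ A → v ∈ S

section MaxMatchWeight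

variable (G : SimpleGraph V) (A : Set V) (w : Sym2 V → ℝ) (S : Set V)

theorem maxMatchWeight_eq_sSup_image :
    maxMatchWeight G A w S =
      sSup ((fun M => ∑ e ∈ M, w e) '' {M | IsPartialMatching G A S M}) := by
  have hmatch (M : Finset (Sym2 V)) : (∀ e ∈ M, ∀ f ∈ M, e ≠ f → ∀ v : V, v ∈ e → v ∉ f) ↔
      IsEdgeMatching M :=
    ⟨fun h e he f hf v hve hvf => by_contra fun hne => h e he f hf hne v hve hvf,
      fun h e he f hf hne v hve hvf => hne (h e he f hf v hve hvf)⟩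
  unfold maxMatchWeight
  congr 1
  ext x
  simp only [hmatch, Set.mem_ofPred_eq, Set.mem_image]
  exact ⟨fun ⟨M, h1, h2, h3, hx⟩ => ⟨M, ⟨h1, h2, h3⟩, hx.symm⟩,
    fun ⟨M, ⟨h1, h2, h3⟩, hx⟩ => ⟨M, h1, h2, h3, hx.symm⟩⟩

variable [Finite V]

theorem finite_sum_image_isPartialMatching :
    ((fun M => ∑ e ∈ M, w e) '' {M | IsPartialMatching G A S M}).Finite :=
  Set.toFinite _ |>.image _

variable {G A S}

theorem sum_le_maxMatchWeight {M : Finset (Sym2 V)} (hM : IsPartialMatching G A S M) :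
    ∑ e ∈ M, w e ≤ maxMatchWeight G A w S := by
  rw [maxMatchWeight_eq_sSup_image]
  exact le_csSup (finite_sum_image_isPartialMatching G A w S).bddAbove ⟨M, hM, rfl⟩

variable (G A S)

theorem exists_sum_eq_maxMatchWeight :
    ∃ M, IsPartialMatching G A S M ∧ ∑ e ∈ M, w e = maxMatchWeight G A w S := by
  rw [maxMatchWeight_eq_sSup_image]
  have hempty : IsPartialMatching G A S ∅ := ⟨by simp, by simp [IsEdgeMatching], by simp⟩
  exact (Set.Nonempty.image _ ⟨∅, hempty⟩).csSup_mem (finite_sum_image_isPartialMatching G A w S)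

end MaxMatchWeight

section Crossover

variable [DecidableEq V] (p : Sym2 V → Prop) [DecidablePred p] (M N : Finset (Sym2 V))

def crossover : Finset (Sym2 V) :=
  M.filter (fun e => ¬ p e) ∪ N.filter p

variable {p M N}

theorem mem_crossover {e : Sym2 V} :
    e ∈ crossover p M N ↔ (e ∈ M ∧ ¬ p e) ∨ (e ∈ N ∧ p e) := by
  simp only [crossover, Finset.mem_union, Finset.mem_filter]

theorem crossover_subset_union : crossover p M N ⊆ M ∪ N := by
  intro e he
  rcases mem_crossover.mp he with ⟨he, -⟩ | ⟨he, -⟩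
  exacts [Finset.mem_union_left _ he, Finset.mem_union_right _ he]

variable (p M N) in
theorem sum_crossover_add_sum_crossover {β : Type*} [AddCommMonoid β] (w : Sym2 V → β) :
    ∑ e ∈ crossover p M N, w e + ∑ e ∈ crossover p N M, w e =
      ∑ e ∈ M, w e + ∑ e ∈ N, w e := by
  have hdisj (M N : Finset (Sym2 V)) : Disjoint (M.filter (fun e => ¬ p e)) (N.filter p) :=
    Finset.disjoint_left.mpr fun _ h1 h2 =>
      (Finset.mem_filter.mp h1).2 (Finset.mem_filter.mp h2).2
  rw [crossover, crossover, Finset.sum_union (hdisj M N), Finset.sum_union (hdisj N M),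
    ← Finset.sum_filter_add_sum_filter_not M p, ← Finset.sum_filter_add_sum_filter_not N p]
  abel

theorem IsEdgeMatching.crossover (hM : IsEdgeMatching M) (hN : IsEdgeMatching N)
    (hp : ∀ e ∈ M, ∀ f ∈ N, ∀ v ∈ e, v ∈ f → (p e ↔ p f)) :
    IsEdgeMatching (crossover p M N) := by
  intro e he f hf v hve hvf
  rcases mem_crossover.mp he with ⟨heM, hpe⟩ | ⟨heN, hpe⟩ <;>
    rcases mem_crossover.mp hf with ⟨hfM, hpf⟩ | ⟨hfN, hpf⟩
  · exact hM e heM f hfM v hve hvf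
  · exact absurd ((hp e heM f hfN v hve hvf).mpr hpf) hpe
  · exact absurd ((hp f hfM e heN v hvf hve).mpr hpe) hpf
  · exact hN e heN f hfN v hve hvf

theorem IsPartialMatching.crossover {G : SimpleGraph V} {A S T U : Set V}
    (hM : IsPartialMatching G A S M) (hN : IsPartialMatching G A T N)
    (hp : ∀ e ∈ M, ∀ f ∈ N, ∀ v ∈ e, v ∈ f → (p e ↔ p f))
    (hU : ∀ e ∈ crossover p M N, ∀ v ∈ e, v ∈ A → v ∈ U) :
    IsPartialMatching G A U (crossover p M N) where
  subset_edgeSet e he := by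
    rcases Finset.mem_union.mp (crossover_subset_union he) with he | he
    exacts [hM.subset_edgeSet he, hN.subset_edgeSet he]
  isEdgeMatching := hM.isEdgeMatching.crossover hN.isEdgeMatching hp
  mem_of_mem := hU

end Crossover

theorem SimpleGraph.reachable_fromEdgeSet_of_mem {E : Set (Sym2 V)} {e : Sym2 V} (he : e ∈ E)
    {x y : V} (hx : x ∈ e) (hy : y ∈ e) : (fromEdgeSet E).Reachable x y := by
  induction e using Sym2.ind with
  | _ a b =>
    have hab : (fromEdgeSet E).Reachable a b := by
      by_cases h : a = b
      · exact h ▸ Reachable.refl a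
      · exact (show (fromEdgeSet E).Adj a b from ⟨he, h⟩).reachable
    rcases Sym2.mem_iff.mp hx with rfl | rfl <;> rcases Sym2.mem_iff.mp hy with rfl | rfl
    exacts [.refl _, hab, hab.symm, .refl _]

theorem SimpleGraph.Walk.IsPath.ne_of_cons_cons {G : SimpleGraph V} {u v w z : V}
    {huv : G.Adj u v} {hvw : G.Adj v w} {q : G.Walk w z} (hp : (cons huv (cons hvw q)).IsPath) :
    u ≠ w := by
  rintro rfl
  exact ((cons_isPath_iff _ _).mp hp).2 (by simp)

section AlternatingPath

variable {A : Set V} {M N : Finset (Sym2 V)}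

theorem mem_of_alternating_step
    (hA : ∀ x y, (fromEdgeSet (M ∪ N : Set (Sym2 V))).Adj x y → (x ∈ A ↔ y ∉ A))
    (hM : IsEdgeMatching M) {u v w : V} (huv : (fromEdgeSet (M ∪ N : Set (Sym2 V))).Adj u v)
    (hvw : (fromEdgeSet (M ∪ N : Set (Sym2 V))).Adj v w) (huw : u ≠ w) (hu : u ∈ A)
    (huvN : s(u, v) ∉ N) : s(v, w) ∈ N ∧ w ∈ A := by
  have huvM : s(u, v) ∈ M := by
    simpa [huvN] using huv.1
  have hvA : v ∉ A := (hA u v huv).mp hu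
  have hvwN : s(v, w) ∈ N := by
    rcases hvw.1 with h | h
    · exact absurd (hM.eq_of_mk_mem huvM h huv.ne) huw
    · exact h
  exact ⟨hvwN, by_contra fun hw => hvA ((hA v w hvw).mpr hw)⟩

theorem exists_mem_of_isPath_cons
    (hA : ∀ x y, (fromEdgeSet (M ∪ N : Set (Sym2 V))).Adj x y → (x ∈ A ↔ y ∉ A))
    (hM : IsEdgeMatching M) (hN : IsEdgeMatching N) :
    ∀ {u v z : V} (huv : (fromEdgeSet (M ∪ N : Set (Sym2 V))).Adj u v)
      (q : (fromEdgeSet (M ∪ N : Set (Sym2 V))).Walk v z),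
      (q.cons huv).IsPath → u ∈ A → s(u, v) ∉ N → z ∈ A → ∃ f ∈ N, z ∈ f
  | _, _, _, huv, .nil, _, hu, _, hz => absurd hz ((hA _ _ huv).mp hu)
  | _, v, _, huv, .cons (v := w) hvw .nil, hp, hu, huvN, _ =>
    ⟨s(v, w), (mem_of_alternating_step hA hM huv hvw hp.ne_of_cons_cons hu huvN).1,
      Sym2.mem_mk_right v w⟩
  | _, _, _, huv, .cons hvw (.cons hwx r), hp, hu, huvN, hz =>
    have ⟨hvwN, hw⟩ := mem_of_alternating_step hA hM huv hvw hp.ne_of_cons_cons hu huvN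
    exists_mem_of_isPath_cons hA hM hN hwx r hp.of_cons.of_cons hw
      (fun hwxN => hp.of_cons.ne_of_cons_cons (hN.eq_of_mk_mem hvwN hwxN hvw.ne)) hz

theorem eq_or_exists_mem_of_reachable
    (hA : ∀ x y, (fromEdgeSet (M ∪ N : Set (Sym2 V))).Adj x y → (x ∈ A ↔ y ∉ A))
    (hM : IsEdgeMatching M) (hN : IsEdgeMatching N) {a z : V}
    (haz : (fromEdgeSet (M ∪ N : Set (Sym2 V))).Reachable a z) (ha : a ∈ A)
    (haN : ∀ f ∈ N, a ∉ f) (hz : z ∈ A) : z = a ∨ ∃ f ∈ N, z ∈ f := by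
  obtain ⟨p, hp⟩ := haz.exists_isPath
  cases p with
  | nil => exact .inl rfl
  | cons hav q =>
    exact .inr (exists_mem_of_isPath_cons hA hM hN hav q hp ha
      (fun havN => haN _ havN (Sym2.mem_mk_left _ _)) hz)

end AlternatingPath

theorem exists_isPartialMatching_exchange {G : SimpleGraph V} {A X Y : Set V}
    {M N : Finset (Sym2 V)}
    (hG : ∀ x y, G.Adj x y → (x ∈ A ↔ y ∉ A)) (hM : IsPartialMatching G A (X ∪ Y) M)
    (hN : IsPartialMatching G A (X ∩ Y) N) (w : Sym2 V → ℝ) :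
    ∃ P Q, IsPartialMatching G A X P ∧ IsPartialMatching G A Y Q ∧
      ∑ e ∈ P, w e + ∑ e ∈ Q, w e = ∑ e ∈ M, w e + ∑ e ∈ N, w e := by
  classical
  set H := fromEdgeSet (M ∪ N : Set (Sym2 V))
  set C := {z | ∃ a ∈ A ∩ (Y \ X), H.Reachable a z}
  have hHA : ∀ x y, H.Adj x y → (x ∈ A ↔ y ∉ A) := fun x y hxy => by
    refine hG x y ?_
    rcases hxy.1 with h | h
    exacts [hM.subset_edgeSet h, hN.subset_edgeSet h]
  have hC : ∀ e ∈ (M ∪ N : Set (Sym2 V)), ∀ v ∈ e, (∀ x ∈ e, x ∈ C) ↔ v ∈ C :=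
    fun e he v hve => ⟨fun h => h v hve, fun ⟨a, ha, hav⟩ x hx =>
      ⟨a, ha, hav.trans (reachable_fromEdgeSet_of_mem he hve hx)⟩⟩
  have hCC : ∀ e ∈ (M ∪ N : Set (Sym2 V)), ∀ f ∈ (M ∪ N : Set (Sym2 V)), ∀ v ∈ e, v ∈ f →
      ((∀ x ∈ e, x ∈ C) ↔ ∀ x ∈ f, x ∈ C) :=
    fun e he f hf v hve hvf => by rw [hC e he v hve, hC f hf v hvf]
  refine ⟨crossover (fun e => ∀ x ∈ e, x ∈ C) M N, crossover (fun e => ∀ x ∈ e, x ∈ C) N M,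
    hM.crossover hN (fun e he f hf => hCC e (.inl he) f (.inr hf)) ?_,
    hN.crossover hM (fun e he f hf => hCC e (.inr he) f (.inl hf)) ?_,
    sum_crossover_add_sum_crossover _ _ _ w⟩
  · intro e he v hve hvA
    rcases mem_crossover.mp he with ⟨heM, heC⟩ | ⟨heN, -⟩
    · by_contra hvX
      have hvY := (hM.mem_of_mem e heM v hve hvA).resolve_left hvX
      exact heC ((hC e (.inl heM) v hve).mpr ⟨v, ⟨hvA, hvY, hvX⟩, .refl v⟩)
    · exact (hN.mem_of_mem e heN v hve hvA).1
  · intro e he v hve hvA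
    rcases mem_crossover.mp he with ⟨heN, -⟩ | ⟨heM, heC⟩
    · exact (hN.mem_of_mem e heN v hve hvA).2
    · by_contra hvY
      have hvX := (hM.mem_of_mem e heM v hve hvA).resolve_right hvY
      obtain ⟨a, ⟨haA, -, haX⟩, hav⟩ := heC v hve
      have haN : ∀ f ∈ N, a ∉ f := fun f hf haf => haX (hN.mem_of_mem f hf a haf haA).1
      rcases eq_or_exists_mem_of_reachable hHA hM.isEdgeMatching hN.isEdgeMatching hav haA haN
        hvA with rfl | ⟨f, hf, hvf⟩
      · exact haX hvX
      · exact hvY (hN.mem_of_mem f hf v hvf hvA).2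

theorem stmt4_general {V : Type} [Fintype V] (G : SimpleGraph V) (A B : Set V)
    (hdisj : Disjoint A B)
    (hbip : ∀ u v : V, G.Adj u v → (u ∈ A ∧ v ∈ B) ∨ (u ∈ B ∧ v ∈ A))
    (w : Sym2 V → ℝ)
    (X Y : Set V) :
    maxMatchWeight G A w X + maxMatchWeight G A w Y ≥
      maxMatchWeight G A w (X ∪ Y) + maxMatchWeight G A w (X ∩ Y) := by
  have hG : ∀ x y, G.Adj x y → (x ∈ A ↔ y ∉ A) := fun x y hxy => by
    rcases hbip x y hxy with ⟨hx, hy⟩ | ⟨hx, hy⟩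
    · exact iff_of_true hx (Set.disjoint_right.mp hdisj hy)
    · exact iff_of_false (Set.disjoint_right.mp hdisj hx) (not_not.mpr hy)
  obtain ⟨M, hM, hMw⟩ := exists_sum_eq_maxMatchWeight G A w (X ∪ Y)
  obtain ⟨N, hN, hNw⟩ := exists_sum_eq_maxMatchWeight G A w (X ∩ Y)
  obtain ⟨P, Q, hP, hQ, hsum⟩ := exists_isPartialMatching_exchange hG hM hN w
  linarith [sum_le_maxMatchWeight w hP, sum_le_maxMatchWeight w hQ]

/-- The partial maximum weight matching function of a bipartite graph with
nonnegative edge weights is submodular. -/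
theorem stmt4 {V : Type} [Fintype V] (G : SimpleGraph V) (A B : Set V)
    (hpart : A ∪ B = Set.univ) (hdisj : Disjoint A B)
    (hbip : ∀ u v : V, G.Adj u v → (u ∈ A ∧ v ∈ B) ∨ (u ∈ B ∧ v ∈ A))
    (w : Sym2 V → ℝ) (hw : ∀ e, 0 ≤ w e)
    (X Y : Set V) (hX : X ⊆ A) (hY : Y ⊆ A) :
    maxMatchWeight G A w X + maxMatchWeight G A w Y ≥
      maxMatchWeight G A w (X ∪ Y) + maxMatchWeight G A w (X ∩ Y) :=
  stmt4_general G A B hdisj hbip w X Y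
end

section
/- Let M_S and M_T be matchings in a graph G whose union has component set C, let B be a finite nonempty set, q : C → B any labeling, and for b ∈ B let M_b = (M_T ∩ E(q^{-1}(b))) ∪ (M_S ∩ (E(C) \ E(q^{-1}(b)))). If edge weights are nonnegative, then ∑_{b∈B} w(M_b) ≥ w(M_T) + (|B| − 1)·w(M_S). -/
/-- Under the component-labeling construction, with nonnegative edge weights,
`∑_{b ∈ B} w(M b) ≥ w(MT) + (|B| - 1) · w(MS)`. -/
theorem stmt8 {V B : Type} [Fintype B] [Nonempty B]
    (G : SimpleGraph V) (MS MT : Finset (Sym2 V))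
    (hMSsub : (↑MS : Set (Sym2 V)) ⊆ G.edgeSet)
    (hMTsub : (↑MT : Set (Sym2 V)) ⊆ G.edgeSet)
    (hMS : ∀ e ∈ MS, ∀ f ∈ MS, e ≠ f → ∀ v : V, v ∈ e → v ∉ f)
    (hMT : ∀ e ∈ MT, ∀ f ∈ MT, e ≠ f → ∀ v : V, v ∈ e → v ∉ f)
    (H : SimpleGraph V) (hH : H = SimpleGraph.fromEdgeSet (↑MS ∪ ↑MT))
    (q : H.ConnectedComponent → B)
    (M : B → Finset (Sym2 V))
    (hM : ∀ (b : B) (e : Sym2 V), e ∈ M b ↔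
      ((e ∈ MT ∧ ∀ v ∈ e, q (H.connectedComponentMk v) = b) ∨
       (e ∈ MS ∧ ¬ ∀ v ∈ e, q (H.connectedComponentMk v) = b)))
    (w : Sym2 V → ℝ) (hw : ∀ e, 0 ≤ w e) :
    ∑ b : B, ∑ e ∈ M b, w e ≥
      (∑ e ∈ MT, w e) + ((Fintype.card B : ℝ) - 1) * ∑ e ∈ MS, w e := by
  classical
  set U := MS ∪ MT with hU
  have hMb : ∀ b, M b ⊆ U := by
    intro b e he
    rcases (hM b e).1 he with ⟨h, _⟩ | ⟨h, _⟩
    · exact Finset.mem_union_right _ h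
    · exact Finset.mem_union_left _ h
  have key : ∀ e ∈ U, ((Finset.univ.filter (fun b => e ∈ M b)).card : ℝ) * w e ≥
      (if e ∈ MT then w e else 0) +
        ((Fintype.card B : ℝ) - 1) * (if e ∈ MS then w e else 0) := by
    intro e heU
    induction e using Sym2.ind with
    | _ x y =>
    have heG : s(x, y) ∈ G.edgeSet := by
      rcases Finset.mem_union.1 heU with h | h
      · exact hMSsub h
      · exact hMTsub h
    have hne : x ≠ y := (G.mem_edgeSet.1 heG).ne
    have hadj : H.Adj x y := by
      rw [hH, SimpleGraph.fromEdgeSet_adj]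
      refine ⟨?_, hne⟩
      rcases Finset.mem_union.1 heU with h | h
      · exact Set.mem_union_left _ h
      · exact Set.mem_union_right _ h
    have hcc : H.connectedComponentMk x = H.connectedComponentMk y :=
      SimpleGraph.ConnectedComponent.sound hadj.reachable
    set b0 := q (H.connectedComponentMk x) with hb0
    have hqv : ∀ v ∈ s(x, y), q (H.connectedComponentMk v) = b0 := by
      intro v hv
      rcases Sym2.mem_iff.1 hv with rfl | rfl
      · rfl
      · rw [← hcc]
    have FactA : s(x, y) ∈ MT → s(x, y) ∈ M b0 := fun h =>
      (hM b0 _).2 (Or.inl ⟨h, hqv⟩)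
    have FactB : s(x, y) ∈ MS → ∀ b, b ≠ b0 → s(x, y) ∈ M b := by
      intro h b hb
      refine (hM b _).2 (Or.inr ⟨h, fun hall => hb ?_⟩)
      rw [← hall x (Sym2.mem_mk_left x y)]
    by_cases hT : s(x, y) ∈ MT <;> by_cases hS : s(x, y) ∈ MS
    · have hfil : Finset.univ.filter (fun b => s(x, y) ∈ M b) = Finset.univ := by
        refine Finset.filter_true_of_mem fun b _ => ?_
        by_cases hb : b = b0
        · exact hb ▸ FactA hT
        · exact FactB hS b hb
      rw [hfil, Finset.card_univ]
      simp only [hT, hS, if_true]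
      ring_nf
      linarith
    · have h1 : 1 ≤ (Finset.univ.filter (fun b => s(x, y) ∈ M b)).card :=
        Finset.card_pos.2 ⟨b0, Finset.mem_filter.2 ⟨Finset.mem_univ _, FactA hT⟩⟩
      have h1' : (1 : ℝ) ≤ ((Finset.univ.filter (fun b => s(x, y) ∈ M b)).card : ℝ) := by
        exact_mod_cast h1
      simp only [hT, hS, if_true, if_false, mul_zero, add_zero]
      nlinarith [hw (s(x, y))]
    · have hsub : Finset.univ \ {b0} ⊆ Finset.univ.filter (fun b => s(x, y) ∈ M b) := by
        intro b hb
        simp only [Finset.mem_sdiff, Finset.mem_singleton] at hb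
        exact Finset.mem_filter.2 ⟨Finset.mem_univ _, FactB hS b hb.2⟩
      have hcard : Fintype.card B - 1 ≤ (Finset.univ.filter (fun b => s(x, y) ∈ M b)).card := by
        calc Fintype.card B - 1 = (Finset.univ \ {b0}).card := by
              rw [Finset.card_sdiff_of_subset (by simp), Finset.card_univ, Finset.card_singleton]
          _ ≤ _ := Finset.card_le_card hsub
      have hB1 : 1 ≤ Fintype.card B := Fintype.card_pos
      have hcard' : (Fintype.card B : ℝ) - 1 ≤
          ((Finset.univ.filter (fun b => s(x, y) ∈ M b)).card : ℝ) := by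
        have := (Nat.cast_le (α := ℝ)).2 hcard
        rwa [Nat.cast_sub hB1, Nat.cast_one] at this
      simp only [hT, hS, if_true, if_false, add_zero, zero_add]
      nlinarith [hw (s(x, y))]
    · exact absurd (Finset.mem_union.1 heU) (by simp [hT, hS])
  have h1 : ∀ b, ∑ e ∈ U, (if e ∈ M b then w e else 0) = ∑ e ∈ M b, w e := by
    intro b
    rw [Finset.sum_ite_mem, Finset.inter_eq_right.2 (hMb b)]
  have hMTsubU : MT ⊆ U := Finset.subset_union_right
  have hMSsubU : MS ⊆ U := Finset.subset_union_left
  calc ∑ b : B, ∑ e ∈ M b, w e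
      = ∑ b : B, ∑ e ∈ U, (if e ∈ M b then w e else 0) := by
        exact Finset.sum_congr rfl fun b _ => (h1 b).symm
    _ = ∑ e ∈ U, ∑ b : B, (if e ∈ M b then w e else 0) := Finset.sum_comm
    _ = ∑ e ∈ U, ((Finset.univ.filter (fun b => e ∈ M b)).card : ℝ) * w e := by
        refine Finset.sum_congr rfl fun e _ => ?_
        rw [← Finset.sum_filter, Finset.sum_const, nsmul_eq_mul]
    _ ≥ ∑ e ∈ U, ((if e ∈ MT then w e else 0) +
          ((Fintype.card B : ℝ) - 1) * (if e ∈ MS then w e else 0)) :=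
        Finset.sum_le_sum key
    _ = (∑ e ∈ MT, w e) + ((Fintype.card B : ℝ) - 1) * ∑ e ∈ MS, w e := by
        rw [Finset.sum_add_distrib, ← Finset.mul_sum,
          Finset.sum_ite_mem, Finset.inter_eq_right.2 hMTsubU,
          Finset.sum_ite_mem, Finset.inter_eq_right.2 hMSsubU]
end

section
/- Let g : Finset B → ℝ be monotone, nonnegative with g(∅) = 0, and suppose the 'greedy exchange' inequality holds: for all finite X, T there exists an element b ∈ T with (g(X ∪ {b}) − g(X))/c(b) ≥ (g(T) − g(X))/c(T), where c(T) = ∑_{b∈T} c(b) > 0 and c(b) > 0. Then if a greedy process picks elements maximizing marginal density, after spending total cost at least c(T) it achieves value at least (1 − e^{-1})·g(T). -/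
/-- Abstract density-greedy analysis: if `g` is monotone, nonnegative, `g ∅ = 0`, costs are
positive, the greedy exchange inequality holds, and a greedy sequence always adds an element
of maximum marginal profit per unit cost, then as soon as the greedy selection has total cost
at least `c(T)` its value is at least `(1 - e⁻¹) · g(T)`. -/
theorem stmt9 {B : Type} [DecidableEq B] (g : Finset B → ℝ)
    (hmono : ∀ X Y : Finset B, X ⊆ Y → g X ≤ g Y)
    (hnonneg : ∀ X : Finset B, 0 ≤ g X) (hempty : g ∅ = 0)
    (c : B → ℝ) (hc : ∀ b, 0 < c b)
    (hexch : ∀ X T' : Finset B, 0 < ∑ b ∈ T', c b →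
      ∃ b ∈ T', (g (insert b X) - g X) / c b ≥ (g T' - g X) / ∑ b' ∈ T', c b')
    (T : Finset B) (hT : 0 < ∑ b ∈ T, c b)
    (S : ℕ → Finset B) (hS0 : S 0 = ∅)
    (hgreedy : ∀ i : ℕ, ∃ b, b ∉ S i ∧ S (i + 1) = insert b (S i) ∧
      ∀ b', b' ∉ S i → (g (insert b' (S i)) - g (S i)) / c b' ≤
        (g (insert b (S i)) - g (S i)) / c b)
    (r : ℕ) (hr : ∑ b ∈ S r, c b ≥ ∑ b ∈ T, c b) :
    g (S r) ≥ (1 - Real.exp (-1)) * g T := by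
  set cT := ∑ b ∈ T, c b with hcT
  have key : ∀ i, g T - g (S i) ≤ g T * Real.exp (-(∑ b ∈ S i, c b) / cT) := by
    intro i
    induction i with
    | zero =>
      rw [hS0, hempty]
      simp
    | succ i ih =>
      obtain ⟨b, hbS, hSsucc, hmax⟩ := hgreedy i
      have hsum : ∑ b' ∈ S (i + 1), c b' = c b + ∑ b' ∈ S i, c b' := by
        rw [hSsucc, Finset.sum_insert hbS]
      have hexpfac : Real.exp (-(∑ b' ∈ S (i+1), c b') / cT)
          = Real.exp (-(c b) / cT) * Real.exp (-(∑ b' ∈ S i, c b') / cT) := by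
        rw [← Real.exp_add, hsum]
        ring_nf
      by_cases hδ : g T - g (S i) ≤ 0
      · have h1 : g (S i) ≤ g (S (i + 1)) := by
          rw [hSsucc]; exact hmono _ _ (Finset.subset_insert _ _)
        have h2 := mul_nonneg (hnonneg T)
          (Real.exp_pos (-(∑ b' ∈ S (i+1), c b') / cT)).le
        linarith
      · push_neg at hδ
        obtain ⟨b', hb'T, hb'⟩ := hexch (S i) T hT
        have hb'ne : b' ∉ S i := by
          intro hmem
          rw [Finset.insert_eq_self.mpr hmem] at hb'
          have hpos : 0 < (g T - g (S i)) / cT := div_pos hδ hT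
          simp only [sub_self, zero_div, ge_iff_le] at hb'
          linarith
        have hge : (g T - g (S i)) / cT ≤ (g (insert b (S i)) - g (S i)) / c b :=
          le_trans hb' (hmax b' hb'ne)
        have hmarg : (g T - g (S i)) / cT * c b ≤ g (insert b (S i)) - g (S i) :=
          (le_div_iff₀ (hc b)).mp hge
        -- deficit shrinks by factor (1 - c b / cT) ≤ exp (- c b / cT)
        have hstep : g T - g (S (i+1)) ≤ (g T - g (S i)) * (1 - c b / cT) := by
          rw [hSsucc]
          have : (g T - g (S i)) / cT * c b = (g T - g (S i)) * (c b / cT) := by ring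
          rw [this] at hmarg
          nlinarith
        have hfac : (1 : ℝ) - c b / cT ≤ Real.exp (-(c b) / cT) := by
          have := Real.add_one_le_exp (-(c b) / cT)
          have h' : -(c b) / cT = -(c b / cT) := by ring
          linarith [this]
        have h2 : (g T - g (S i)) * (1 - c b / cT)
            ≤ (g T - g (S i)) * Real.exp (-(c b) / cT) :=
          mul_le_mul_of_nonneg_left hfac hδ.le
        have h3 : (g T - g (S i)) * Real.exp (-(c b) / cT)
            ≤ g T * Real.exp (-(∑ b' ∈ S i, c b') / cT) * Real.exp (-(c b) / cT) :=
          mul_le_mul_of_nonneg_right ih (Real.exp_pos _).le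
        calc g T - g (S (i+1)) ≤ (g T - g (S i)) * (1 - c b / cT) := hstep
          _ ≤ (g T - g (S i)) * Real.exp (-(c b) / cT) := h2
          _ ≤ g T * Real.exp (-(∑ b' ∈ S i, c b') / cT) * Real.exp (-(c b) / cT) := h3
          _ = g T * Real.exp (-(∑ b' ∈ S (i+1), c b') / cT) := by
              rw [hexpfac]; ring
  have hkeyr := key r
  have hratio : (1 : ℝ) ≤ (∑ b ∈ S r, c b) / cT := (one_le_div hT).mpr hr
  have hexp : Real.exp (-(∑ b ∈ S r, c b) / cT) ≤ Real.exp (-1) := by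
    apply Real.exp_le_exp.mpr
    have : -(∑ b ∈ S r, c b) / cT = -((∑ b ∈ S r, c b) / cT) := by ring
    rw [this]
    linarith
  have hfin : g T * Real.exp (-(∑ b ∈ S r, c b) / cT) ≤ g T * Real.exp (-1) :=
    mul_le_mul_of_nonneg_left hexp (hnonneg T)
  nlinarith [hnonneg T]
end

section
/- Let f be the partial maximum weight matching function of an edge-weighted bipartite graph G = (A ∪ B, E) with nonnegative weights, and let S, T ⊆ A. Then ∑_{b ∈ B'} [f(S ∪ T_b) − f(S)] ≥ f(T) − f(S), where {T_b}_{b ∈ B'} is any finite partition of T \ S into blocks. -/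
set_option linter.unusedSectionVars false
open Relation

namespace MMW

variable {V : Type}

def Match (M : Finset (Sym2 V)) : Prop :=
  ∀ e ∈ M, ∀ f ∈ M, e ≠ f → ∀ v : V, v ∈ e → v ∉ f

def FeasA (G : SimpleGraph V) (A S : Set V) (M : Finset (Sym2 V)) : Prop :=
  (↑M : Set (Sym2 V)) ⊆ G.edgeSet ∧ Match M ∧ ∀ e ∈ M, ∀ v ∈ e, v ∈ A → v ∈ S

lemma mmw_eq (G : SimpleGraph V) (A : Set V) (w : Sym2 V → ℝ) (S : Set V) :
    maxMatchWeight G A w S =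
      sSup {x : ℝ | ∃ M : Finset (Sym2 V), FeasA G A S M ∧ x = ∑ e ∈ M, w e} := by
  unfold maxMatchWeight FeasA Match
  congr 1; ext x; constructor
  · rintro ⟨M, h1, h2, h3, h4⟩; exact ⟨M, ⟨h1, h2, h3⟩, h4⟩
  · rintro ⟨M, ⟨h1, h2, h3⟩, h4⟩; exact ⟨M, h1, h2, h3, h4⟩

lemma vset_finite [Fintype V] (G : SimpleGraph V) (A : Set V) (w : Sym2 V → ℝ) (S : Set V) :
    Set.Finite {x : ℝ | ∃ M : Finset (Sym2 V), FeasA G A S M ∧ x = ∑ e ∈ M, w e} := by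
  classical
  have hS : {x : ℝ | ∃ M : Finset (Sym2 V), FeasA G A S M ∧ x = ∑ e ∈ M, w e}
      ⊆ Set.range (fun M : Finset (Sym2 V) => ∑ e ∈ M, w e) := by
    rintro x ⟨M, _, rfl⟩; exact ⟨M, rfl⟩
  exact (Set.finite_range _).subset hS

lemma vset_nonempty (G : SimpleGraph V) (A : Set V) (w : Sym2 V → ℝ) (S : Set V) :
    Set.Nonempty {x : ℝ | ∃ M : Finset (Sym2 V), FeasA G A S M ∧ x = ∑ e ∈ M, w e} := by
  refine ⟨0, ∅, ⟨?_, ?_, ?_⟩, by simp⟩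
  · simp
  · intro e he; simp at he
  · intro e he; simp at he

lemma exists_opt [Fintype V] (G : SimpleGraph V) (A : Set V) (w : Sym2 V → ℝ) (S : Set V) :
    ∃ M : Finset (Sym2 V), FeasA G A S M ∧ maxMatchWeight G A w S = ∑ e ∈ M, w e := by
  rw [mmw_eq]
  exact (vset_nonempty G A w S).csSup_mem (vset_finite G A w S)

lemma le_mmw [Fintype V] {G : SimpleGraph V} {A S : Set V} (w : Sym2 V → ℝ)
    {M : Finset (Sym2 V)} (h : FeasA G A S M) :
    ∑ e ∈ M, w e ≤ maxMatchWeight G A w S := by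
  rw [mmw_eq]
  exact le_csSup (vset_finite G A w S).bddAbove ⟨M, h, rfl⟩

lemma mmw_mono [Fintype V] {G : SimpleGraph V} {A : Set V} (w : Sym2 V → ℝ)
    {S S' : Set V} (hSS' : S ⊆ S') :
    maxMatchWeight G A w S ≤ maxMatchWeight G A w S' := by
  obtain ⟨M, hM, hval⟩ := exists_opt G A w S
  rw [hval]
  exact le_mmw w ⟨hM.1, hM.2.1, fun e he v hv hA => hSS' (hM.2.2 e he v hv hA)⟩


/-- Dart walks in the union of two matchings, starting from edge `s(a0,b0)` entered at `a0`.
`DW MN a0 b0 u v` means: the walk has entered the edge `s(u,v)` at `u`, exiting at `v`. -/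
inductive DW (MN : Set (Sym2 V)) (a0 b0 : V) : V → V → Prop
  | start : DW MN a0 b0 a0 b0
  | step {u v x : V} : DW MN a0 b0 u v → s(v, x) ∈ MN → s(v, x) ≠ s(u, v) →
      DW MN a0 b0 v x

def EStep (MN : Set (Sym2 V)) (c d : Sym2 V) : Prop :=
  c ∈ MN ∧ d ∈ MN ∧ ∃ t : V, t ∈ c ∧ t ∈ d

lemma mem_repr {t : V} {d : Sym2 V} (h : t ∈ d) : ∃ y, d = s(t, y) := by
  induction d using Sym2.ind with
  | _ p q =>
    rcases Sym2.mem_iff.mp h with rfl | rfl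
    · exact ⟨q, rfl⟩
    · exact ⟨p, Sym2.eq_swap⟩

section Keystone

variable {G : SimpleGraph V} {A B Z : Set V}
variable {M N : Finset (Sym2 V)} {a0 b0 : V}

variable (hdisj : Disjoint A B)
  (hbip : ∀ u v : V, G.Adj u v → (u ∈ A ∧ v ∈ B) ∨ (u ∈ B ∧ v ∈ A))
  (hME : (↑M : Set (Sym2 V)) ⊆ G.edgeSet) (hMm : Match M)
  (hNE : (↑N : Set (Sym2 V)) ⊆ G.edgeSet) (hNm : Match N)
  (hNf : ∀ e ∈ N, ∀ v ∈ e, v ∈ A → v ∈ Z)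
  (ha0A : a0 ∈ A) (ha0Z : a0 ∉ Z) (he0 : s(a0, b0) ∈ M)

include hdisj hbip hME hMm hNE hNm hNf ha0A ha0Z he0 in
lemma DW_inv {u v : V} (hdw : DW (↑M ∪ ↑N) a0 b0 u v) :
    (s(u, v) ∈ M ∧ u ∈ A ∧ v ∈ B ∧ (u ∈ Z ∨ (u = a0 ∧ v = b0))) ∨
    (s(u, v) ∈ N ∧ u ∈ B ∧ v ∈ A ∧ v ∈ Z) := by
  induction hdw with
  | start =>
    left
    have hadj : G.Adj a0 b0 := hME he0
    have hb0B : b0 ∈ B := by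
      rcases hbip _ _ hadj with ⟨_, h⟩ | ⟨h, _⟩
      · exact h
      · exact (Set.disjoint_left.mp hdisj ha0A h).elim
    exact ⟨he0, ha0A, hb0B, Or.inr ⟨rfl, rfl⟩⟩
  | @step u v x hdw' hmem hne ih =>
    have hvmem : v ∈ s(v, x) := Sym2.mem_mk_left v x
    have hvmem' : v ∈ s(u, v) := Sym2.mem_mk_right u v
    rcases ih with ⟨heM, huA, hvB, _⟩ | ⟨heN, huB, hvA, hvZ⟩
    · -- previous edge in M, v ∈ B; the next edge must be in N
      have hdN : s(v, x) ∈ N := by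
        rcases hmem with hM' | hN'
        · exact absurd hvmem' (hMm _ hM' _ heM hne v hvmem)
        · exact hN'
      have hadj : G.Adj v x := hNE hdN
      have hxA : x ∈ A := by
        rcases hbip _ _ hadj with ⟨h, _⟩ | ⟨_, h⟩
        · exact (Set.disjoint_left.mp hdisj h hvB).elim
        · exact h
      exact Or.inr ⟨hdN, hvB, hxA, hNf _ hdN x (Sym2.mem_mk_right v x) hxA⟩
    · -- previous edge in N, v ∈ A; the next edge must be in M
      have hdM : s(v, x) ∈ M := by
        rcases hmem with hM' | hN'
        · exact hM'
        · exact absurd hvmem' (hNm _ hN' _ heN hne v hvmem)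
      have hadj : G.Adj v x := hME hdM
      have hxB : x ∈ B := by
        rcases hbip _ _ hadj with ⟨_, h⟩ | ⟨h, _⟩
        · exact h
        · exact (Set.disjoint_left.mp hdisj hvA h).elim
      exact Or.inl ⟨hdM, hvA, hxB, Or.inl hvZ⟩

include hdisj hbip hME hMm hNE hNm hNf ha0A ha0Z he0 in
lemma DW_cov {u v : V} (hdw : DW (↑M ∪ ↑N) a0 b0 u v) :
    ∀ d ∈ ((↑M ∪ ↑N) : Set (Sym2 V)), u ∈ d →
      ∃ p q : V, DW (↑M ∪ ↑N) a0 b0 p q ∧ s(p, q) = d := by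
  induction hdw with
  | start =>
    intro d hd hmem
    rcases hd with hdM | hdN
    · by_cases hde : d = s(a0, b0)
      · exact ⟨a0, b0, DW.start, hde.symm⟩
      · exact absurd (Sym2.mem_mk_left a0 b0) (hMm _ hdM _ he0 hde a0 hmem)
    · exact absurd (hNf _ hdN a0 hmem ha0A) ha0Z
  | @step u v x hdw' hmem hne ih =>
    intro d hd hvd
    by_cases hdc : d = s(u, v)
    · exact ⟨u, v, hdw', hdc.symm⟩
    · obtain ⟨y, rfl⟩ := mem_repr hvd
      exact ⟨v, y, DW.step hdw' hd hdc, rfl⟩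

include hdisj hbip hME hMm hNE hNm hNf ha0A ha0Z he0 in
lemma keystone :
    ∀ e' : Sym2 V, ReflTransGen (EStep (↑M ∪ ↑N)) s(a0, b0) e' →
      e' = s(a0, b0) ∨ ∀ v ∈ e', v ∈ A → v ∈ Z := by
  have cov : ∀ e' : Sym2 V, ReflTransGen (EStep (↑M ∪ ↑N)) s(a0, b0) e' →
      e' = s(a0, b0) ∨ ∃ p q : V, DW (↑M ∪ ↑N) a0 b0 p q ∧ s(p, q) = e' := by
    intro e' h
    induction h with
    | refl => exact Or.inl rfl
    | @tail c d hc hstep ih =>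
      obtain ⟨hcMN, hdMN, t, htc, htd⟩ := hstep
      rcases ih with rfl | ⟨p, q, hdw, rfl⟩
      · -- c = s(a0,b0)
        rcases Sym2.mem_iff.mp htc with rfl | rfl
        · -- t = a0
          rcases hdMN with hdM | hdN
          · by_cases hde : d = s(t, b0)
            · exact Or.inl hde
            · exact absurd (Sym2.mem_mk_left t b0) (hMm _ hdM _ he0 hde t htd)
          · exact absurd (hNf _ hdN t htd ha0A) ha0Z
        · -- t = b0
          by_cases hde : d = s(a0, t)
          · exact Or.inl hde
          · obtain ⟨y, rfl⟩ := mem_repr htd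
            exact Or.inr ⟨t, y, DW.step DW.start hdMN hde, rfl⟩
      · -- c covered by state (p,q)
        rcases Sym2.mem_iff.mp htc with rfl | rfl
        · -- t = p : entry vertex
          exact Or.inr (DW_cov hdisj hbip hME hMm hNE hNm hNf ha0A ha0Z he0 hdw d hdMN htd)
        · -- t = q : exit vertex
          by_cases hde : d = s(p, t)
          · exact Or.inr ⟨p, t, hdw, hde.symm⟩
          · obtain ⟨y, rfl⟩ := mem_repr htd
            exact Or.inr ⟨t, y, DW.step hdw hdMN hde, rfl⟩
  intro e' h
  rcases cov e' h with rfl | ⟨p, q, hdw, rfl⟩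
  · exact Or.inl rfl
  · rcases DW_inv hdisj hbip hME hMm hNE hNm hNf ha0A ha0Z he0 hdw with
      ⟨heM, hpA, hqB, hopt⟩ | ⟨heN, hpB, hqA, hqZ⟩
    · rcases hopt with hpZ | ⟨rfl, rfl⟩
      · refine Or.inr fun v hv hvA => ?_
        rcases Sym2.mem_iff.mp hv with rfl | rfl
        · exact hpZ
        · exact (Set.disjoint_left.mp hdisj hvA hqB).elim
      · exact Or.inl rfl
    · refine Or.inr fun v hv hvA => ?_
      rcases Sym2.mem_iff.mp hv with rfl | rfl
      · exact (Set.disjoint_left.mp hdisj hvA hpB).elim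
      · exact hqZ

end Keystone


lemma edge_split {G : SimpleGraph V} {A B : Set V} (hdisj : Disjoint A B)
    (hbip : ∀ u v : V, G.Adj u v → (u ∈ A ∧ v ∈ B) ∨ (u ∈ B ∧ v ∈ A))
    {e : Sym2 V} (he : e ∈ G.edgeSet) :
    ∃ a b : V, e = s(a, b) ∧ a ∈ A ∧ b ∈ B := by
  induction e using Sym2.ind with
  | _ p q =>
    rcases hbip p q he with ⟨hp, hq⟩ | ⟨hp, hq⟩
    · exact ⟨p, q, rfl, hp, hq⟩
    · exact ⟨q, p, Sym2.eq_swap, hq, hp⟩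

lemma mmw_submodular [Fintype V] {G : SimpleGraph V} {A B : Set V}
    (hdisj : Disjoint A B)
    (hbip : ∀ u v : V, G.Adj u v → (u ∈ A ∧ v ∈ B) ∨ (u ∈ B ∧ v ∈ A))
    (w : Sym2 V → ℝ) (X Y : Set V) :
    maxMatchWeight G A w (X ∪ Y) + maxMatchWeight G A w (X ∩ Y) ≤
      maxMatchWeight G A w X + maxMatchWeight G A w Y := by
  classical
  obtain ⟨M, ⟨hME, hMm, hMf⟩, hMval⟩ := exists_opt G A w (X ∪ Y)
  obtain ⟨N, ⟨hNE, hNm, hNf⟩, hNval⟩ := exists_opt G A w (X ∩ Y)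
  set MN : Set (Sym2 V) := ↑M ∪ ↑N with hMNdef
  set cls : Sym2 V → Prop := fun d => ∃ e', ReflTransGen (EStep MN) d e' ∧ e' ∈ M ∧
    ∃ a, a ∈ e' ∧ a ∈ A ∧ a ∈ Y ∧ a ∉ X with hclsdef
  -- cls propagates backwards along EStep
  have hcross : ∀ c d : Sym2 V, c ∈ MN → d ∈ MN → (∃ t : V, t ∈ c ∧ t ∈ d) →
      cls d → cls c := by
    rintro c d hc hd ht ⟨e', hconn, he'M, ha⟩
    exact ⟨e', ReflTransGen.head ⟨hc, hd, ht⟩ hconn, he'M, ha⟩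
  set K1 : Finset (Sym2 V) := M.filter (fun e => ¬ cls e) ∪ N.filter (fun e => cls e)
    with hK1def
  set K2 : Finset (Sym2 V) := M.filter (fun e => cls e) ∪ N.filter (fun e => ¬ cls e)
    with hK2def
  have hK1mem : ∀ e : Sym2 V, e ∈ K1 ↔ (e ∈ M ∧ ¬ cls e) ∨ (e ∈ N ∧ cls e) := by
    intro e; simp [hK1def, Finset.mem_union, Finset.mem_filter]
  have hK2mem : ∀ e : Sym2 V, e ∈ K2 ↔ (e ∈ M ∧ cls e) ∨ (e ∈ N ∧ ¬ cls e) := by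
    intro e; simp [hK2def, Finset.mem_union, Finset.mem_filter]
  have hMmn : ∀ e ∈ M, e ∈ MN := fun e he => Or.inl (Finset.mem_coe.mpr he)
  have hNmn : ∀ e ∈ N, e ∈ MN := fun e he => Or.inr (Finset.mem_coe.mpr he)
  -- edge set containments
  have hK1E : (↑K1 : Set (Sym2 V)) ⊆ G.edgeSet := by
    intro e he
    rcases (hK1mem e).mp (Finset.mem_coe.mp he) with ⟨h, _⟩ | ⟨h, _⟩
    · exact hME (Finset.mem_coe.mpr h)
    · exact hNE (Finset.mem_coe.mpr h)
  have hK2E : (↑K2 : Set (Sym2 V)) ⊆ G.edgeSet := by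
    intro e he
    rcases (hK2mem e).mp (Finset.mem_coe.mp he) with ⟨h, _⟩ | ⟨h, _⟩
    · exact hME (Finset.mem_coe.mpr h)
    · exact hNE (Finset.mem_coe.mpr h)
  -- matching properties
  have hK1m : Match K1 := by
    intro e he f hf hne v hve hvf
    rcases (hK1mem e).mp he with ⟨heM, hecls⟩ | ⟨heN, hecls⟩ <;>
      rcases (hK1mem f).mp hf with ⟨hfM, hfcls⟩ | ⟨hfN, hfcls⟩
    · exact hMm e heM f hfM hne v hve hvf
    · exact hecls (hcross e f (hMmn e heM) (hNmn f hfN) ⟨v, hve, hvf⟩ hfcls)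
    · exact hfcls (hcross f e (hMmn f hfM) (hNmn e heN) ⟨v, hvf, hve⟩ hecls)
    · exact hNm e heN f hfN hne v hve hvf
  have hK2m : Match K2 := by
    intro e he f hf hne v hve hvf
    rcases (hK2mem e).mp he with ⟨heM, hecls⟩ | ⟨heN, hecls⟩ <;>
      rcases (hK2mem f).mp hf with ⟨hfM, hfcls⟩ | ⟨hfN, hfcls⟩
    · exact hMm e heM f hfM hne v hve hvf
    · exact hfcls (hcross f e (hNmn f hfN) (hMmn e heM) ⟨v, hvf, hve⟩ hecls)
    · exact hecls (hcross e f (hNmn e heN) (hMmn f hfM) ⟨v, hve, hvf⟩ hfcls)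
    · exact hNm e heN f hfN hne v hve hvf
  -- feasibility of K1 for X
  have hK1f : ∀ e ∈ K1, ∀ v ∈ e, v ∈ A → v ∈ X := by
    intro e he v hv hvA
    rcases (hK1mem e).mp he with ⟨heM, hecls⟩ | ⟨heN, hecls⟩
    · obtain ⟨a, b, rfl, haA, hbB⟩ := edge_split hdisj hbip (hME (Finset.mem_coe.mpr heM))
      have hva : v = a := by
        rcases Sym2.mem_iff.mp hv with rfl | rfl
        · rfl
        · exact ((Set.disjoint_left.mp hdisj hvA hbB).elim)
      subst hva
      by_contra hvX
      have hvXY : v ∈ X ∪ Y := hMf _ heM v (Sym2.mem_mk_left v b) hvA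
      exact hecls ⟨s(v, b), ReflTransGen.refl, heM,
        v, Sym2.mem_mk_left v b, hvA, hvXY.resolve_left hvX, hvX⟩
    · exact (hNf _ heN v hv hvA).1
  -- feasibility of K2 for Y : uses the keystone lemma
  have hK2f : ∀ e ∈ K2, ∀ v ∈ e, v ∈ A → v ∈ Y := by
    intro e he v hv hvA
    rcases (hK2mem e).mp he with ⟨heM, hecls⟩ | ⟨heN, hecls⟩
    · obtain ⟨a, b, rfl, haA, hbB⟩ := edge_split hdisj hbip (hME (Finset.mem_coe.mpr heM))
      have hva : v = a := by
        rcases Sym2.mem_iff.mp hv with rfl | rfl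
        · rfl
        · exact ((Set.disjoint_left.mp hdisj hvA hbB).elim)
      subst hva
      by_cases hvZ : v ∈ X ∩ Y
      · exact hvZ.2
      · obtain ⟨e', hconn, he'M, a', ha'mem, ha'A, ha'Y, ha'X⟩ := hecls
        rcases keystone hdisj hbip hME hMm hNE hNm hNf hvA hvZ heM e' hconn with
          heq | hall
        · subst heq
          rcases Sym2.mem_iff.mp ha'mem with rfl | rfl
          · exact ha'Y
          · exact ((Set.disjoint_left.mp hdisj ha'A hbB).elim)
        · exact absurd ((hall a' ha'mem ha'A).1) ha'X
    · exact (hNf _ heN v hv hvA).2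
  -- the sums
  have hd1 : Disjoint (M.filter (fun e => ¬ cls e)) (N.filter (fun e => cls e)) := by
    rw [Finset.disjoint_left]
    intro x hx hx'
    exact (Finset.mem_filter.mp hx).2 (Finset.mem_filter.mp hx').2
  have hd2 : Disjoint (M.filter (fun e => cls e)) (N.filter (fun e => ¬ cls e)) := by
    rw [Finset.disjoint_left]
    intro x hx hx'
    exact (Finset.mem_filter.mp hx').2 (Finset.mem_filter.mp hx).2
  have hsum1 : ∑ e ∈ K1, w e =
      ∑ e ∈ M.filter (fun e => ¬ cls e), w e + ∑ e ∈ N.filter (fun e => cls e), w e :=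
    Finset.sum_union hd1
  have hsum2 : ∑ e ∈ K2, w e =
      ∑ e ∈ M.filter (fun e => cls e), w e + ∑ e ∈ N.filter (fun e => ¬ cls e), w e :=
    Finset.sum_union hd2
  have hMsum := Finset.sum_filter_add_sum_filter_not M (fun e => cls e) w
  have hNsum := Finset.sum_filter_add_sum_filter_not N (fun e => cls e) w
  have hle1 : ∑ e ∈ K1, w e ≤ maxMatchWeight G A w X := le_mmw w ⟨hK1E, hK1m, hK1f⟩
  have hle2 : ∑ e ∈ K2, w e ≤ maxMatchWeight G A w Y := le_mmw w ⟨hK2E, hK2m, hK2f⟩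
  rw [hMval, hNval]
  linarith

end MMW

/-- Generalized Lemma 4: for any finite partition `{T_b}` of `T \ S`, the sum over the
blocks of the marginal value of adding the block to `S` is at least the marginal value
of `T` over `S`, for the partial maximum weight matching function. -/
theorem stmt19 {V ι : Type} [Fintype V] [Fintype ι]
    (G : SimpleGraph V) (A B : Set V)
    (hpart : A ∪ B = Set.univ) (hdisj : Disjoint A B)
    (hbip : ∀ u v : V, G.Adj u v → (u ∈ A ∧ v ∈ B) ∨ (u ∈ B ∧ v ∈ A))
    (w : Sym2 V → ℝ) (hw : ∀ e, 0 ≤ w e)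
    (S T : Set V) (hS : S ⊆ A) (hT : T ⊆ A)
    (Tb : ι → Set V) (hdisjb : Pairwise fun a b => Disjoint (Tb a) (Tb b))
    (hcover : (⋃ b : ι, Tb b) = T \ S) :
    ∑ b : ι, (maxMatchWeight G A w (S ∪ Tb b) - maxMatchWeight G A w S) ≥
      maxMatchWeight G A w T - maxMatchWeight G A w S := by
  classical
  have key : ∀ s : Finset ι,
      maxMatchWeight G A w (S ∪ ⋃ b ∈ s, Tb b) - maxMatchWeight G A w S ≤
        ∑ b ∈ s, (maxMatchWeight G A w (S ∪ Tb b) - maxMatchWeight G A w S) := by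
    intro s
    induction s using Finset.induction with
    | empty => simp
    | @insert a s ha ih =>
      rw [Finset.sum_insert ha]
      have hXY : (S ∪ Tb a) ∪ (S ∪ ⋃ b ∈ s, Tb b) = S ∪ ⋃ b ∈ insert a s, Tb b := by
        ext v
        simp only [Set.mem_union, Set.mem_iUnion, Finset.mem_insert]
        constructor
        · rintro ((h | h) | (h | ⟨b, hb, h⟩))
          · exact Or.inl h
          · exact Or.inr ⟨a, Or.inl rfl, h⟩
          · exact Or.inl h
          · exact Or.inr ⟨b, Or.inr hb, h⟩
        · rintro (h | ⟨b, (rfl | hb), h⟩)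
          · exact Or.inl (Or.inl h)
          · exact Or.inl (Or.inr h)
          · exact Or.inr (Or.inr ⟨b, hb, h⟩)
      have hsub := MMW.mmw_submodular hdisj hbip w (S ∪ Tb a) (S ∪ ⋃ b ∈ s, Tb b)
      rw [hXY] at hsub
      have hmono : maxMatchWeight G A w S ≤
          maxMatchWeight G A w ((S ∪ Tb a) ∩ (S ∪ ⋃ b ∈ s, Tb b)) :=
        MMW.mmw_mono w (Set.subset_inter Set.subset_union_left Set.subset_union_left)
      linarith
  have hfin := key Finset.univ
  have hU : (⋃ b ∈ (Finset.univ : Finset ι), Tb b) = T \ S := by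
    rw [← hcover]; simp
  rw [hU] at hfin
  have hTsub : T ⊆ S ∪ (T \ S) := by
    intro v hv
    by_cases h : v ∈ S
    · exact Or.inl h
    · exact Or.inr ⟨hv, h⟩
  have hmonoT : maxMatchWeight G A w T ≤ maxMatchWeight G A w (S ∪ (T \ S)) :=
    MMW.mmw_mono w hTsub
  linarith
end
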